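/- For a weakly lex Pos-enriched category C, the exact completion C_ex has finite products; in particular, taking a weak binary product P of X and Y in C and Γ the weak limit pairing R and S over P, the object (P,Γ) with projections [π_X], [π_Y] is a binary product of (X,R) and (Y,S) in C_ex, and for a weak terminal T in C with weak product T × T, the object (T, T×T) is terminal in C_ex. -/

import Mathlib

open CategoryTheory

universe w v u v' u' v'' u''

/-- A `Pos`-enriched category: each hom-set carries a partial order and
composition is monotone in both variables. -/
class PosEnriched (C : Type u) [Category.{v} C] where
  homOrder : ∀ X Y : C, PartialOrder (X ⟶ Y)
  comp_mono : ∀ {X Y Z : C} {f f' : X ⟶ Y} {g g' : Y ⟶ Z},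
    (homOrder X Y).le f f' → (homOrder Y Z).le g g' → (homOrder X Z).le (f ≫ g) (f' ≫ g')

attribute [instance] PosEnriched.homOrder

namespace PosEnr

variable {C : Type u} [Category.{v} C] [PosEnriched C]

theorem comp_mono' {X Y Z : C} {f f' : X ⟶ Y} {g g' : Y ⟶ Z} (h : f ≤ f') (h' : g ≤ g') :
    f ≫ g ≤ f' ≫ g' := PosEnriched.comp_mono h h'

/-- `m` is an order-monomorphism (ff-morphism): postcomposition reflects the order
(hence, by antisymmetry, is also injective). -/
def OrderMono {X Y : C} (m : X ⟶ Y) : Prop :=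
  ∀ {Z : C} (u v : Z ⟶ X), u ≫ m ≤ v ≫ m → u ≤ v

/-- `e` is an so-morphism: it is left orthogonal, in the `Pos`-enriched sense, to all
order-monomorphisms (the relevant square of hom-posets is a pullback in `Pos`). -/
def IsSo {A B : C} (e : A ⟶ B) : Prop :=
  ∀ {X Y : C} (m : X ⟶ Y), OrderMono m →
    (∀ (f : A ⟶ X) (g : B ⟶ Y), f ≫ m = e ≫ g → ∃ h : B ⟶ X, e ≫ h = f ∧ h ≫ m = g) ∧
    (∀ h h' : B ⟶ X, e ≫ h ≤ e ≫ h' → h ≫ m ≤ h' ≫ m → h ≤ h')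

/-- `e : I ⟶ X` is the (conical, `Pos`-enriched) inserter of the ordered pair `(f, g)`. -/
def IsInserterP {X Y I : C} (f g : X ⟶ Y) (e : I ⟶ X) : Prop :=
  e ≫ f ≤ e ≫ g ∧
  (∀ {Z : C} (h : Z ⟶ X), h ≫ f ≤ h ≫ g → ∃ u : Z ⟶ I, u ≫ e = h) ∧
  OrderMono e

/-- A weak inserter: only the existence part of the universal property. -/
def IsWeakInserter {X Y I : C} (f g : X ⟶ Y) (e : I ⟶ X) : Prop :=
  e ≫ f ≤ e ≫ g ∧
  (∀ {Z : C} (h : Z ⟶ X), h ≫ f ≤ h ≫ g → ∃ u : Z ⟶ I, u ≫ e = h)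

/-- `q : Y ⟶ Q` is the coinserter of the ordered pair `(u, v)`. -/
def IsCoinserterP {X Y Q : C} (u v : X ⟶ Y) (q : Y ⟶ Q) : Prop :=
  u ≫ q ≤ v ≫ q ∧
  (∀ {Z : C} (h : Y ⟶ Z), u ≫ h ≤ v ≫ h → ∃ t : Q ⟶ Z, q ≫ t = h) ∧
  (∀ {Z : C} (h h' : Q ⟶ Z), q ≫ h ≤ q ≫ h' → h ≤ h')

/-- `(c0, c1)` is the comma object (lax pullback) of the ordered pair `(f, g)`. -/
def IsCommaP {X Y Z P : C} (f : X ⟶ Z) (g : Y ⟶ Z) (c0 : P ⟶ X) (c1 : P ⟶ Y) : Prop :=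
  c0 ≫ f ≤ c1 ≫ g ∧
  (∀ {A : C} (u0 : A ⟶ X) (u1 : A ⟶ Y), u0 ≫ f ≤ u1 ≫ g →
      ∃ w : A ⟶ P, w ≫ c0 = u0 ∧ w ≫ c1 = u1) ∧
  (∀ {A : C} (w w' : A ⟶ P), w ≫ c0 ≤ w' ≫ c0 → w ≫ c1 ≤ w' ≫ c1 → w ≤ w')

/-- An effective epimorphism: a coinserter of some pair. -/
def EffectiveEpiP {Y Q : C} (q : Y ⟶ Q) : Prop :=
  ∃ (X : C) (u v : X ⟶ Y), IsCoinserterP u v q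

/-- Binary product in the `Pos`-enriched (conical) sense. -/
def IsBinProdP {X Y P : C} (p : P ⟶ X) (q : P ⟶ Y) : Prop :=
  (∀ {Z : C} (f : Z ⟶ X) (g : Z ⟶ Y), ∃ h : Z ⟶ P, h ≫ p = f ∧ h ≫ q = g) ∧
  (∀ {Z : C} (h h' : Z ⟶ P), h ≫ p ≤ h' ≫ p → h ≫ q ≤ h' ≫ q → h ≤ h')

/-- Terminal object in the `Pos`-enriched sense. -/
def IsTerminalP (T : C) : Prop :=
  ∀ X : C, ∃ f : X ⟶ T, ∀ g : X ⟶ T, g = f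

/-- Product of a (possibly infinite) family in the `Pos`-enriched sense. -/
def IsProdFamP {ι : Type w} (X : ι → C) (P : C) (p : ∀ i, P ⟶ X i) : Prop :=
  (∀ {Z : C} (f : ∀ i, Z ⟶ X i), ∃ h : Z ⟶ P, ∀ i, h ≫ p i = f i) ∧
  (∀ {Z : C} (h h' : Z ⟶ P), (∀ i, h ≫ p i ≤ h' ≫ p i) → h ≤ h')

/-- Weak product of a family: only the existence part. -/
def IsWeakProdFam {ι : Type w} (X : ι → C) (P : C) (p : ∀ i, P ⟶ X i) : Prop :=
  ∀ {Z : C} (f : ∀ i, Z ⟶ X i), ∃ h : Z ⟶ P, ∀ i, h ≫ p i = f i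

/-- Pullback in the `Pos`-enriched (conical) sense. -/
def IsPullbackP {X Y Z P : C} (f : X ⟶ Z) (g : Y ⟶ Z) (p0 : P ⟶ X) (p1 : P ⟶ Y) : Prop :=
  p0 ≫ f = p1 ≫ g ∧
  (∀ {A : C} (u0 : A ⟶ X) (u1 : A ⟶ Y), u0 ≫ f = u1 ≫ g →
      ∃ w : A ⟶ P, w ≫ p0 = u0 ∧ w ≫ p1 = u1) ∧
  (∀ {A : C} (w w' : A ⟶ P), w ≫ p0 ≤ w' ≫ p0 → w ≫ p1 ≤ w' ≫ p1 → w ≤ w')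

/-- A congruence, given by a jointly order-monic pair which is order-reflexive and
transitive (in terms of generalized elements). -/
def IsCongPair {S X : C} (s0 s1 : S ⟶ X) : Prop :=
  (∀ {A : C} (u v : A ⟶ S), u ≫ s0 ≤ v ≫ s0 → u ≫ s1 ≤ v ≫ s1 → u ≤ v) ∧
  (∀ {A : C} (a0 a1 : A ⟶ X), a0 ≤ a1 → ∃ u : A ⟶ S, u ≫ s0 = a0 ∧ u ≫ s1 = a1) ∧
  (∀ {A : C} (u v : A ⟶ S), u ≫ s1 = v ≫ s0 →
      ∃ t : A ⟶ S, t ≫ s0 = u ≫ s0 ∧ t ≫ s1 = v ≫ s1)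

/-- An so-projective object: its covariant hom-functor to `Pos` preserves so-morphisms
(equivalently, sends them to surjections). -/
def SoProjective (P : C) : Prop :=
  ∀ {A B : C} (e : A ⟶ B), IsSo e → ∀ f : P ⟶ B, ∃ g : P ⟶ A, g ≫ e = f

end PosEnr

/-- A weight `W : D ⥤ Pos` for `Pos`-enriched weighted limits, given concretely. -/
structure PosWeight (D : Type u') [Category.{v'} D] [PosEnriched D] where
  obj : D → Type
  po : ∀ d, PartialOrder (obj d)
  map : ∀ {d d' : D}, (d ⟶ d') → obj d → obj d'
  map_monotone : ∀ {d d' : D} (f : d ⟶ d') (x y : obj d),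
    (po d).le x y → (po d').le (map f x) (map f y)
  map_id : ∀ (d : D) (x : obj d), map (𝟙 d) x = x
  map_comp : ∀ {d d' d'' : D} (f : d ⟶ d') (g : d' ⟶ d'') (x : obj d),
    map (f ≫ g) x = map g (map f x)
  map_le : ∀ {d d' : D} {f g : d ⟶ d'}, f ≤ g → ∀ x : obj d, (po d').le (map f x) (map g x)

attribute [instance] PosWeight.po

/-- A finite weight: finitely many objects, finite hom-posets, finite values. -/
def PosWeight.IsFiniteWeight {D : Type u'} [Category.{v'} D] [PosEnriched D]
    (W : PosWeight D) : Prop :=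
  Finite D ∧ (∀ d d' : D, Finite (d ⟶ d')) ∧ ∀ d, Finite (W.obj d)

/-- A `Pos`-enriched (locally monotone) functor. -/
structure PosFunctor (C : Type u) (E : Type u') [Category.{v} C] [Category.{v'} E]
    [PosEnriched C] [PosEnriched E] where
  toFunctor : C ⥤ E
  map_le : ∀ {X Y : C} {f g : X ⟶ Y}, f ≤ g → toFunctor.map f ≤ toFunctor.map g

/-- Composition of `Pos`-enriched functors. -/
def PosFunctor.comp {D : Type u''} {C : Type u} {E : Type u'}
    [Category.{v''} D] [Category.{v} C] [Category.{v'} E]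
    [PosEnriched D] [PosEnriched C] [PosEnriched E]
    (G : PosFunctor D C) (F : PosFunctor C E) : PosFunctor D E where
  toFunctor := G.toFunctor ⋙ F.toFunctor
  map_le h := F.map_le (G.map_le h)

/-- A cylinder (`Pos`-natural transformation) `W ⟶ C(L, F-)`. -/
structure Cylinder {D : Type u'} [Category.{v'} D] [PosEnriched D] (W : PosWeight D)
    {E : Type u} [Category.{v} E] [PosEnriched E] (F : PosFunctor D E) (L : E) where
  app : ∀ d : D, W.obj d → (L ⟶ F.toFunctor.obj d)
  monotone : ∀ (d : D) (x y : W.obj d), (W.po d).le x y → app d x ≤ app d y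
  naturality : ∀ {d d' : D} (f : d ⟶ d') (x : W.obj d),
    app d x ≫ F.toFunctor.map f = app d' (W.map f x)

/-- The image of a cylinder under a `Pos`-enriched functor. -/
def Cylinder.mapF {D : Type u''} {C : Type u} {E : Type u'}
    [Category.{v''} D] [Category.{v} C] [Category.{v'} E]
    [PosEnriched D] [PosEnriched C] [PosEnriched E]
    {W : PosWeight D} {G : PosFunctor D C} {L : C}
    (F : PosFunctor C E) (c : Cylinder W G L) :
    Cylinder W (G.comp F) (F.toFunctor.obj L) where
  app d x := F.toFunctor.map (c.app d x)
  monotone d x y h := F.map_le (c.monotone d x y h)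
  naturality f x := by
    show F.toFunctor.map _ ≫ F.toFunctor.map _ = _
    rw [← F.toFunctor.map_comp, c.naturality]

/-- `L` with cylinder `c` is a weak `W`-weighted limit of `F`:
the induced comparison maps on hom-posets are surjective. -/
def IsWeakWeightedLimitP {D : Type u'} [Category.{v'} D] [PosEnriched D] (W : PosWeight D)
    {E : Type u} [Category.{v} E] [PosEnriched E] (F : PosFunctor D E)
    (L : E) (c : Cylinder W F L) : Prop :=
  ∀ (Z : E) (φ : Cylinder W F Z), ∃ h : Z ⟶ L, ∀ (d : D) (x : W.obj d),
    h ≫ c.app d x = φ.app d x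

/-- `L` with cylinder `c` is a (strong) `W`-weighted limit of `F`. -/
def IsWeightedLimitP {D : Type u'} [Category.{v'} D] [PosEnriched D] (W : PosWeight D)
    {E : Type u} [Category.{v} E] [PosEnriched E] (F : PosFunctor D E)
    (L : E) (c : Cylinder W F L) : Prop :=
  IsWeakWeightedLimitP W F L c ∧
  ∀ (Z : E) (h h' : Z ⟶ L), (∀ (d : D) (x : W.obj d), h ≫ c.app d x ≤ h' ≫ c.app d x) → h ≤ h'

/-- A weakly lex `Pos`-category: all weak finite weighted limits exist. -/
def WeaklyLex (C : Type u) [Category.{v} C] [PosEnriched C] : Prop :=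
  ∀ (D : Type) [SmallCategory D] [PosEnriched D] (W : PosWeight D) (F : PosFunctor D C),
    W.IsFiniteWeight → ∃ (L : C) (c : Cylinder W F L), IsWeakWeightedLimitP W F L c

/-- All finite weighted limits exist (in the strong sense). -/
def HasFiniteWeightedLimitsP (C : Type u) [Category.{v} C] [PosEnriched C] : Prop :=
  ∀ (D : Type) [SmallCategory D] [PosEnriched D] (W : PosWeight D) (F : PosFunctor D C),
    W.IsFiniteWeight → ∃ (L : C) (c : Cylinder W F L), IsWeightedLimitP W F L c

open PosEnr

/-- A regular `Pos`-enriched category. -/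
def IsRegularCat (C : Type u) [Category.{v} C] [PosEnriched C] : Prop :=
  HasFiniteWeightedLimitsP C ∧
  (∀ {X Y : C} (f : X ⟶ Y), ∃ (I : C) (e : X ⟶ I) (m : I ⟶ Y),
      IsSo e ∧ OrderMono m ∧ e ≫ m = f) ∧
  (∀ {X Y Z P : C} (f : X ⟶ Z) (g : Y ⟶ Z) (p0 : P ⟶ X) (p1 : P ⟶ Y),
      IsPullbackP f g p0 p1 → IsSo f → IsSo p1)

/-- An exact `Pos`-enriched category: regular, and every congruence is effective,
i.e. is the kernel congruence (comma object `q/q`) of some morphism. -/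
def IsExactCat (C : Type u) [Category.{v} C] [PosEnriched C] : Prop :=
  IsRegularCat C ∧
  ∀ {S X : C} (s0 s1 : S ⟶ X), IsCongPair s0 s1 →
    ∃ (Q : C) (q : X ⟶ Q), IsCommaP q q s0 s1

/-- Fully order-faithful: full and order-reflecting (hence faithful) on hom-posets. -/
def FullyOrderFaithful {C : Type u} {E : Type u'} [Category.{v} C] [Category.{v'} E]
    [PosEnriched C] [PosEnriched E] (F : PosFunctor C E) : Prop :=
  (∀ {X Y : C} (g : F.toFunctor.obj X ⟶ F.toFunctor.obj Y), ∃ f : X ⟶ Y, F.toFunctor.map f = g) ∧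
  (∀ {X Y : C} (f g : X ⟶ Y), F.toFunctor.map f ≤ F.toFunctor.map g → f ≤ g)

/-- An equivalence of `Pos`-enriched categories. -/
def IsEquivP {C : Type u} {E : Type u'} [Category.{v} C] [Category.{v'} E]
    [PosEnriched C] [PosEnriched E] (F : PosFunctor C E) : Prop :=
  FullyOrderFaithful F ∧ ∀ Y : E, ∃ X : C, Nonempty (F.toFunctor.obj X ≅ Y)

/-- Preservation of all finite weighted limits by a `Pos`-enriched functor. -/
def PreservesFiniteWeightedLimitsP {C : Type u} {E : Type u'} [Category.{v} C] [Category.{v'} E]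
    [PosEnriched C] [PosEnriched E] (F : PosFunctor C E) : Prop :=
  ∀ (D : Type) [SmallCategory D] [PosEnriched D] (W : PosWeight D), W.IsFiniteWeight →
    ∀ (G : PosFunctor D C) (L : C) (c : Cylinder W G L),
      IsWeightedLimitP W G L c →
      IsWeightedLimitP W (G.comp F) (F.toFunctor.obj L) (c.mapF F)

/-- A regular `Pos`-enriched functor: preserves finite weighted limits and effective
epimorphisms. -/
def IsRegularFunctor {C : Type u} {E : Type u'} [Category.{v} C] [Category.{v'} E]
    [PosEnriched C] [PosEnriched E] (F : PosFunctor C E) : Prop :=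
  PreservesFiniteWeightedLimitsP F ∧
  ∀ {X Y : C} (e : X ⟶ Y), EffectiveEpiP e → EffectiveEpiP (F.toFunctor.map e)

/-- A left covering functor: for every weak finite weighted limit in the domain, any
comparison morphism into the corresponding (strong) limit in the codomain is an
effective epimorphism. -/
def LeftCovering {C : Type u} {E : Type u'} [Category.{v} C] [Category.{v'} E]
    [PosEnriched C] [PosEnriched E] (F : PosFunctor C E) : Prop :=
  ∀ (D : Type) [SmallCategory D] [PosEnriched D] (W : PosWeight D), W.IsFiniteWeight →
    ∀ (G : PosFunctor D C) (L : C) (c : Cylinder W G L), IsWeakWeightedLimitP W G L c →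
    ∀ (L' : E) (c' : Cylinder W (G.comp F) L'), IsWeightedLimitP W (G.comp F) L' c' →
    ∀ h : F.toFunctor.obj L ⟶ L', (∀ (d : D) (x : W.obj d),
        h ≫ c'.app d x = F.toFunctor.map (c.app d x)) →
      EffectiveEpiP h

/-- The full subcategory of a `Pos`-enriched category is `Pos`-enriched. -/
instance fullSubPosEnriched {C : Type u} [Category.{v} C] [PosEnriched C] (Z : C → Prop) :
    PosEnriched (ObjectProperty.FullSubcategory Z) where
  homOrder X Y := PartialOrder.lift (fun f : X ⟶ Y => f.hom)
    (fun _ _ h => ObjectProperty.hom_ext Z h)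
  comp_mono h h' := PosEnriched.comp_mono h h'

/-! ## The exact completion -/

open PosEnr

/-- A pseudocongruence in a `Pos`-enriched category: an order-reflexive and transitive
parallel pair. These are the objects of the exact completion. -/
structure ExObj (C : Type u) [Category.{v} C] [PosEnriched C] where
  X : C
  R : C
  r0 : R ⟶ X
  r1 : R ⟶ X
  orefl : ∀ {A : C} (a0 a1 : A ⟶ X), a0 ≤ a1 → ∃ u : A ⟶ R, u ≫ r0 = a0 ∧ u ≫ r1 = a1
  tra : ∀ {A : C} (u v : A ⟶ R), u ≫ r1 = v ≫ r0 →
    ∃ t : A ⟶ R, t ≫ r0 = u ≫ r0 ∧ t ≫ r1 = v ≫ r1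

namespace ExObj

variable {C : Type u} [Category.{v} C] [PosEnriched C]

/-- `f : X ⟶ Y` is compatible from `(X,R)` to `(Y,S)`. -/
def Compat (A B : ExObj C) (f : A.X ⟶ B.X) : Prop :=
  ∃ fb : A.R ⟶ B.R, fb ≫ B.r0 = A.r0 ≫ f ∧ fb ≫ B.r1 = A.r1 ≫ f

/-- The preorder `f ≼ g` on compatible morphisms, given by factoring `(f,g)` through
the codomain pseudocongruence. -/
def Pre (A B : ExObj C) (f g : A.X ⟶ B.X) : Prop :=
  ∃ s : A.X ⟶ B.R, s ≫ B.r0 = f ∧ s ≫ B.r1 = g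

theorem Pre.refl (A B : ExObj C) (f : A.X ⟶ B.X) : Pre A B f f := by
  obtain ⟨u, h0, h1⟩ := B.orefl f f le_rfl
  exact ⟨u, h0, h1⟩

theorem Pre.trans' {A B : ExObj C} {f g h : A.X ⟶ B.X}
    (h1 : Pre A B f g) (h2 : Pre A B g h) : Pre A B f h := by
  obtain ⟨s, hs0, hs1⟩ := h1
  obtain ⟨t, ht0, ht1⟩ := h2
  obtain ⟨w, hw0, hw1⟩ := B.tra s t (by rw [hs1, ht0])
  exact ⟨w, by rw [hw0, hs0], by rw [hw1, ht1]⟩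

theorem Compat.comp {A B D : ExObj C} {f : A.X ⟶ B.X} {g : B.X ⟶ D.X}
    (hf : Compat A B f) (hg : Compat B D g) : Compat A D (f ≫ g) := by
  obtain ⟨fb, h0, h1⟩ := hf
  obtain ⟨gb, k0, k1⟩ := hg
  refine ⟨fb ≫ gb, ?_, ?_⟩
  · rw [Category.assoc, k0, ← Category.assoc, h0, Category.assoc]
  · rw [Category.assoc, k1, ← Category.assoc, h1, Category.assoc]

theorem Pre.comp_left {A B D : ExObj C} {f f' : A.X ⟶ B.X} (g : B.X ⟶ D.X)
    (hg : Compat B D g) (h : Pre A B f f') : Pre A D (f ≫ g) (f' ≫ g) := by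
  obtain ⟨s, hs0, hs1⟩ := h
  obtain ⟨gb, k0, k1⟩ := hg
  refine ⟨s ≫ gb, ?_, ?_⟩
  · rw [Category.assoc, k0, ← Category.assoc, hs0]
  · rw [Category.assoc, k1, ← Category.assoc, hs1]

theorem Pre.comp_right {A B D : ExObj C} (f : A.X ⟶ B.X) {g g' : B.X ⟶ D.X}
    (h : Pre B D g g') : Pre A D (f ≫ g) (f ≫ g') := by
  obtain ⟨s, hs0, hs1⟩ := h
  exact ⟨f ≫ s, by rw [Category.assoc, hs0], by rw [Category.assoc, hs1]⟩

theorem Pre.compCongr {A B D : ExObj C} {f f' : A.X ⟶ B.X} {g g' : B.X ⟶ D.X}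
    (hg : Compat B D g) (h1 : Pre A B f f') (h2 : Pre B D g g') :
    Pre A D (f ≫ g) (f' ≫ g') :=
  (Pre.comp_left g hg h1).trans' (Pre.comp_right f' h2)

/-- The equivalence relation on compatible morphisms. -/
def exSetoid (A B : ExObj C) : Setoid {f : A.X ⟶ B.X // Compat A B f} where
  r f g := Pre A B f.1 g.1 ∧ Pre A B g.1 f.1
  iseqv := ⟨fun f => ⟨Pre.refl A B f.1, Pre.refl A B f.1⟩, fun h => ⟨h.2, h.1⟩,
    fun h1 h2 => ⟨h1.1.trans' h2.1, h2.2.trans' h1.2⟩⟩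

/-- The exact completion `C_ex` as a category: objects are pseudocongruences, morphisms
are equivalence classes of compatible morphisms. -/
instance exCategory : Category (ExObj C) where
  Hom A B := Quotient (exSetoid A B)
  id A := Quotient.mk _ ⟨𝟙 A.X, ⟨𝟙 A.R, by simp, by simp⟩⟩
  comp {A B D} f g :=
    Quotient.liftOn₂ f g (fun f g => Quotient.mk _ ⟨f.1 ≫ g.1, f.2.comp g.2⟩)
      (fun a b a' b' ha hb => Quotient.sound
        ⟨Pre.compCongr b.2 ha.1 hb.1, Pre.compCongr b'.2 ha.2 hb.2⟩)
  id_comp {A B} f := Quotient.inductionOn f fun f => Quotient.sound (by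
    constructor <;> · simp only [Category.id_comp]; exact Pre.refl A B f.1)
  comp_id {A B} f := Quotient.inductionOn f fun f => Quotient.sound (by
    constructor <;> · simp only [Category.comp_id]; exact Pre.refl A B f.1)
  assoc {A B D E} f g h := Quotient.inductionOn₃ f g h fun f g h => Quotient.sound (by
    constructor <;> · simp only [Category.assoc]; exact Pre.refl A E _)

/-- The `Pos`-enrichment of the exact completion. -/
instance exPosEnriched : PosEnriched (ExObj C) where
  homOrder A B :=
    { le := fun f g => Quotient.liftOn₂ f g (fun f g => Pre A B f.1 g.1)
        (fun a b a' b' ha hb => propext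
          ⟨fun h => (ha.2.trans' h).trans' hb.1, fun h => (ha.1.trans' h).trans' hb.2⟩)
      le_refl := fun f => Quotient.inductionOn f fun f => Pre.refl A B f.1
      le_trans := fun f g h => Quotient.inductionOn₃ f g h
        (fun f g h h1 h2 => Pre.trans' h1 h2)
      le_antisymm := fun f g => Quotient.inductionOn₂ f g
        (fun f g h1 h2 => Quotient.sound ⟨h1, h2⟩) }
  comp_mono {A B D} {f f'} {g g'} h h' := by
    revert h h'
    refine Quotient.inductionOn₂ f f' (fun a a' => Quotient.inductionOn₂ g g'
      (fun b b' h h' => ?_))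
    exact Pre.compCongr b.2 h h'

end ExObj

/-! ## The canonical embedding `Γ : C → C_ex` -/

namespace ExObj

variable {C : Type u} [Category.{v} C] [PosEnriched C]

variable (I : C → C) (i0 i1 : ∀ X : C, I X ⟶ X)

/-- The pseudocongruence `(X, I_X)` associated to a chosen weak comma object `I_X` of
`(1_X, 1_X)`. -/
def commaExObj (hle : ∀ X, i0 X ≤ i1 X)
    (hfac : ∀ (X : C) {A : C} (a0 a1 : A ⟶ X), a0 ≤ a1 →
      ∃ u : A ⟶ I X, u ≫ i0 X = a0 ∧ u ≫ i1 X = a1) (X : C) : ExObj C where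
  X := X
  R := I X
  r0 := i0 X
  r1 := i1 X
  orefl a0 a1 h := hfac X a0 a1 h
  tra u v huv := by
    refine hfac X _ _ ?_
    calc u ≫ i0 X ≤ u ≫ i1 X := PosEnriched.comp_mono le_rfl (hle X)
      _ = v ≫ i0 X := huv
      _ ≤ v ≫ i1 X := PosEnriched.comp_mono le_rfl (hle X)

/-- The canonical functor `Γ : C → C_ex`, `X ↦ (X, I_X)`, `f ↦ [f]`. -/
def GammaFunc (hle : ∀ X, i0 X ≤ i1 X)
    (hfac : ∀ (X : C) {A : C} (a0 a1 : A ⟶ X), a0 ≤ a1 →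
      ∃ u : A ⟶ I X, u ≫ i0 X = a0 ∧ u ≫ i1 X = a1) : C ⥤ ExObj C where
  obj X := commaExObj I i0 i1 hle hfac X
  map {X Y} f := Quotient.mk _ ⟨f, by
    obtain ⟨u, h0, h1⟩ := hfac Y (i0 X ≫ f) (i1 X ≫ f)
      (PosEnriched.comp_mono (hle X) le_rfl)
    exact ⟨u, h0, h1⟩⟩
  map_id X := Quotient.sound (by
    constructor <;> exact Pre.refl _ _ _)
  map_comp f g := Quotient.sound (by
    constructor <;> exact Pre.refl _ _ _)

/-- The canonical quotient morphism `[1_X] : Γ X → (X, R)` in `C_ex`. -/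
def exQuot (hle : ∀ X, i0 X ≤ i1 X)
    (hfac : ∀ (X : C) {A : C} (a0 a1 : A ⟶ X), a0 ≤ a1 →
      ∃ u : A ⟶ I X, u ≫ i0 X = a0 ∧ u ≫ i1 X = a1) (A : ExObj C) :
    (GammaFunc I i0 i1 hle hfac).obj A.X ⟶ A :=
  Quotient.mk _ ⟨𝟙 A.X, by
    obtain ⟨u, h0, h1⟩ := A.orefl (i0 A.X) (i1 A.X) (hle A.X)
    exact ⟨u, by simpa [GammaFunc, commaExObj] using h0, by simpa [GammaFunc, commaExObj] using h1⟩⟩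

end ExObj

/-!
Weak finite limits in `C` are obtained as weak conical limits of finite diagrams in which no two
arrows compose. A morphism into `(P, Γ)` is represented by a morphism into the weak product `P`,
and `Γ` relates two generalized elements of `P` exactly when `R` relates their `X`-components and
`S` their `Y`-components. Hence pairings exist because `P` is a weak product, and the projections
are jointly order-monic because the order of `C_ex` is the relation of the codomain. Since
`T × T` relates any two generalized elements of `T`, all parallel morphisms into `(T, T × T)`
are identified, and one exists because `T` is weakly terminal.
-/

namespace ExObj

variable {C : Type u} [Category.{v} C] [PosEnriched C]

/-- `Pre A B f g` is `B.Rel f g` and `Compat A B f` is `B.Rel (A.r0 ≫ f) (A.r1 ≫ f)`,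
definitionally. -/
def Rel (A : ExObj C) {Z : C} (a0 a1 : Z ⟶ A.X) : Prop :=
  ∃ t : Z ⟶ A.R, t ≫ A.r0 = a0 ∧ t ≫ A.r1 = a1

theorem Rel.of_le (A : ExObj C) {Z : C} {a0 a1 : Z ⟶ A.X} (h : a0 ≤ a1) : A.Rel a0 a1 :=
  A.orefl a0 a1 h

theorem Rel.trans {A : ExObj C} {Z : C} {a0 a1 a2 : Z ⟶ A.X} (h01 : A.Rel a0 a1)
    (h12 : A.Rel a1 a2) : A.Rel a0 a2 := by
  obtain ⟨s, hs0, hs1⟩ := h01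
  obtain ⟨t, ht0, ht1⟩ := h12
  obtain ⟨w, hw0, hw1⟩ := A.tra s t (hs1.trans ht0.symm)
  exact ⟨w, hw0.trans hs0, hw1.trans ht1⟩

section Product

variable {A B : ExObj C} {P G : C} {πX : P ⟶ A.X} {πY : P ⟶ B.X} {g0 g1 : G ⟶ P}

/-- `(G, g0, g1)` is the paper's `Γ`, the weak limit pairing `A.R` and `B.R` over `P`. -/
def IsWeakPairing (A B : ExObj C) (πX : P ⟶ A.X) (πY : P ⟶ B.X) (g0 g1 : G ⟶ P) : Prop :=
  ∀ {Z : C} (a0 a1 : Z ⟶ P), (∃ t : Z ⟶ G, t ≫ g0 = a0 ∧ t ≫ g1 = a1) ↔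
    A.Rel (a0 ≫ πX) (a1 ≫ πX) ∧ B.Rel (a0 ≫ πY) (a1 ≫ πY)

/-- The object `(P, Γ)`. -/
def prod (hG : IsWeakPairing A B πX πY g0 g1) : ExObj C where
  X := P
  R := G
  r0 := g0
  r1 := g1
  orefl a0 a1 h := (hG a0 a1).2
    ⟨Rel.of_le A (comp_mono' h le_rfl), Rel.of_le B (comp_mono' h le_rfl)⟩
  tra u v huv := by
    obtain ⟨huX, huY⟩ := (hG (u ≫ g0) (u ≫ g1)).1 ⟨u, rfl, rfl⟩
    obtain ⟨hvX, hvY⟩ := (hG (v ≫ g0) (v ≫ g1)).1 ⟨v, rfl, rfl⟩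
    rw [huv] at huX huY
    exact (hG _ _).2 ⟨huX.trans hvX, huY.trans hvY⟩

def prodFst (hG : IsWeakPairing A B πX πY g0 g1) : prod hG ⟶ A :=
  Quotient.mk _ ⟨πX, ((hG g0 g1).1 ⟨𝟙 G, Category.id_comp _, Category.id_comp _⟩).1⟩

def prodSnd (hG : IsWeakPairing A B πX πY g0 g1) : prod hG ⟶ B :=
  Quotient.mk _ ⟨πY, ((hG g0 g1).1 ⟨𝟙 G, Category.id_comp _, Category.id_comp _⟩).2⟩

theorem isBinProdP_prod
    (hP : ∀ {Z : C} (f : Z ⟶ A.X) (g : Z ⟶ B.X), ∃ h : Z ⟶ P, h ≫ πX = f ∧ h ≫ πY = g)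
    (hG : IsWeakPairing A B πX πY g0 g1) : IsBinProdP (prodFst hG) (prodSnd hG) := by
  refine ⟨fun {Z} f g => ?_, fun {Z} h h' => ?_⟩
  · induction f using Quotient.inductionOn with | h f =>
    induction g using Quotient.inductionOn with | h g =>
    obtain ⟨h, hf, hg⟩ := hP f.1 g.1
    have hh : Compat Z (prod hG) h := by
      refine (hG (Z.r0 ≫ h) (Z.r1 ≫ h)).2 ⟨?_, ?_⟩ <;> simp only [Category.assoc, hf, hg]
      exacts [f.2, g.2]
    exact ⟨Quotient.mk _ ⟨h, hh⟩, congrArg _ (Subtype.ext hf), congrArg _ (Subtype.ext hg)⟩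
  · induction h using Quotient.inductionOn with | h h =>
    induction h' using Quotient.inductionOn with | h h' =>
    exact fun hX hY => (hG h.1 h'.1).2 ⟨hX, hY⟩

end Product

section Terminal

variable {X P : C} {p0 p1 : P ⟶ X}

/-- For `X` weakly terminal and `P` a weak product `X × X`, this is the paper's `(T, T × T)`. -/
def codiscrete (hP : ∀ {Z : C} (a0 a1 : Z ⟶ X), ∃ t : Z ⟶ P, t ≫ p0 = a0 ∧ t ≫ p1 = a1) :
    ExObj C where
  X := X
  R := P
  r0 := p0
  r1 := p1
  orefl a0 a1 _ := hP a0 a1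
  tra _ _ _ := hP _ _

theorem isTerminalP_codiscrete
    (hP : ∀ {Z : C} (a0 a1 : Z ⟶ X), ∃ t : Z ⟶ P, t ≫ p0 = a0 ∧ t ≫ p1 = a1)
    (hX : ∀ Z : C, Nonempty (Z ⟶ X)) : IsTerminalP (codiscrete hP) := by
  intro Z
  obtain ⟨f⟩ := hX Z.X
  refine ⟨Quotient.mk _ ⟨f, hP _ _⟩, fun g => ?_⟩
  induction g using Quotient.inductionOn with | h g =>
  exact Quotient.sound ⟨hP _ _, hP _ _⟩

end Terminal

end ExObj

namespace WeaklyLex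

/-- The morphisms of the shape with vertices `Src ⊕ Tgt` and one arrow `inl a ⟶ inr b` for each
element of `E a b`; no two non-identity arrows are composable. -/
inductive BipartiteHom {Src Tgt : Type} (E : Src → Tgt → Type) :
    Src ⊕ Tgt → Src ⊕ Tgt → Type where
  | id (x : Src ⊕ Tgt) : BipartiteHom E x x
  | edge {a : Src} {b : Tgt} (h : E a b) : BipartiteHom E (Sum.inl a) (Sum.inr b)

variable {Src Tgt : Type} {E : Src → Tgt → Type}

instance [∀ a b, Subsingleton (E a b)] (x y : Src ⊕ Tgt) :
    Subsingleton (BipartiteHom E x y) := by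
  constructor
  rintro (_ | _) (_ | _)
  · rfl
  · exact congrArg BipartiteHom.edge (Subsingleton.elim _ _)

def BipartiteHom.comp : ∀ {x y z : Src ⊕ Tgt}, BipartiteHom E x y → BipartiteHom E y z →
    BipartiteHom E x z
  | _, _, _, .id _, g => g
  | _, _, _, .edge h, .id _ => .edge h

def Bipartite (_ : Src → Tgt → Type) : Type := Src ⊕ Tgt

instance : SmallCategory (Bipartite E) where
  Hom x y := BipartiteHom E x y
  id x := BipartiteHom.id x
  comp f g := f.comp g
  id_comp _ := rfl
  comp_id f := by cases f <;> rfl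
  assoc f g h := by cases f <;> cases g <;> cases h <;> rfl

instance : PosEnriched (Bipartite E) where
  homOrder _ _ :=
    { le := Eq
      le_refl := fun _ => rfl
      le_trans := fun _ _ _ => Eq.trans
      le_antisymm := fun _ _ h _ => h }
  comp_mono h h' := by subst h h'; rfl

def conicalWeight (D : Type) [SmallCategory D] [PosEnriched D] : PosWeight D where
  obj _ := PUnit
  po _ := inferInstance
  map _ x := x
  map_monotone _ _ _ h := h
  map_id _ _ := rfl
  map_comp _ _ _ := rfl
  map_le _ _ := le_rfl

theorem conicalWeight_isFiniteWeight [Finite Src] [Finite Tgt] [∀ a b, Subsingleton (E a b)] :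
    (conicalWeight (Bipartite E)).IsFiniteWeight :=
  ⟨inferInstanceAs (Finite (Src ⊕ Tgt)),
    fun (x y : Src ⊕ Tgt) => Finite.of_subsingleton (α := BipartiteHom E x y),
    fun _ => inferInstanceAs (Finite PUnit)⟩

variable {C : Type u} [Category.{v} C] [PosEnriched C]

def bipartiteDiagram (Fo : Src ⊕ Tgt → C)
    (Fe : ∀ {a b}, E a b → (Fo (Sum.inl a) ⟶ Fo (Sum.inr b))) :
    PosFunctor (Bipartite E) C where
  toFunctor :=
    { obj := Fo
      map := fun f => match f with
        | .id x => 𝟙 (Fo x)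
        | .edge h => Fe h
      map_id := fun _ => rfl
      map_comp := fun f g => by
        change BipartiteHom E _ _ at f g
        cases f <;> cases g
        · exact (Category.id_comp _).symm
        · exact (Category.id_comp _).symm
        · exact (Category.comp_id _).symm }
  map_le h := by subst h; rfl

theorem exists_weakLimit_bipartite (hC : WeaklyLex C) [Finite Src] [Finite Tgt]
    [∀ a b, Subsingleton (E a b)] (Fo : Src ⊕ Tgt → C)
    (Fe : ∀ {a b}, E a b → (Fo (Sum.inl a) ⟶ Fo (Sum.inr b))) :
    ∃ (L : C) (ℓ : ∀ d, L ⟶ Fo d),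
      (∀ {a b} (h : E a b), ℓ (Sum.inl a) ≫ Fe h = ℓ (Sum.inr b)) ∧
      ∀ (Z : C) (m : ∀ d, Z ⟶ Fo d),
        (∀ {a b} (h : E a b), m (Sum.inl a) ≫ Fe h = m (Sum.inr b)) →
        ∃ u : Z ⟶ L, ∀ d, u ≫ ℓ d = m d := by
  obtain ⟨L, c, hc⟩ :=
    hC (Bipartite E) _ (bipartiteDiagram Fo Fe) conicalWeight_isFiniteWeight
  refine ⟨L, fun d => c.app d PUnit.unit, fun h => ?_, fun Z m hm => ?_⟩
  · exact c.naturality (d := Sum.inl _) (d' := Sum.inr _) (BipartiteHom.edge h) PUnit.unit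
  · obtain ⟨u, hu⟩ := hc Z
      { app := fun d _ => m d
        monotone := fun _ _ _ _ => le_rfl
        naturality := fun {d d'} f _ => by
          change BipartiteHom E _ _ at f
          cases f
          · exact Category.comp_id _
          · exact hm ‹_› }
    exact ⟨u, fun d => hu d PUnit.unit⟩

def noEdges (α : Type) : α → Empty → Type := fun _ b => b.elim

instance : ∀ a b, Subsingleton (noEdges Src a b) := fun _ b => b.elim

theorem exists_weakTerminal (hC : WeaklyLex C) : ∃ T : C, ∀ Z : C, Nonempty (Z ⟶ T) := by
  obtain ⟨L, _, -, hL⟩ := hC.exists_weakLimit_bipartite (E := noEdges Empty)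
    (fun d : Empty ⊕ Empty => (d.elim Empty.elim Empty.elim : C)) (fun {_ b} _ => b.elim)
  refine ⟨L, fun Z => ?_⟩
  obtain ⟨u, -⟩ := hL Z (fun d => d.elim Empty.elim Empty.elim) (fun {_ b} _ => b.elim)
  exact ⟨u⟩

theorem exists_weakBinProd (hC : WeaklyLex C) (X Y : C) :
    ∃ (P : C) (p : P ⟶ X) (q : P ⟶ Y),
      ∀ {Z : C} (f : Z ⟶ X) (g : Z ⟶ Y), ∃ h : Z ⟶ P, h ≫ p = f ∧ h ≫ q = g := by
  obtain ⟨L, ℓ, -, hL⟩ := hC.exists_weakLimit_bipartite (E := noEdges Bool)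
    (fun | .inl true => X | .inl false => Y | .inr b => b.elim) (fun {_ b} _ => b.elim)
  refine ⟨L, ℓ (.inl true), ℓ (.inl false), fun {Z} f g => ?_⟩
  obtain ⟨u, hu⟩ := hL Z (fun | .inl true => f | .inl false => g | .inr b => b.elim)
    (fun {_ b} _ => b.elim)
  exact ⟨u, hu (.inl true), hu (.inl false)⟩

/-- The weak limit `Γ` is taken over the diagram with sources `P₀, P₁, R, S`, targets
`X₀, X₁, Y₀, Y₁` and arrows `πX : Pᵢ ⟶ Xᵢ`, `πY : Pᵢ ⟶ Yᵢ`, `rᵢ : R ⟶ Xᵢ`, `sᵢ : S ⟶ Yᵢ`. -/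
inductive PairingSrc : Type | p0 | p1 | r | s

inductive PairingTgt : Type | x0 | x1 | y0 | y1

instance : Finite PairingSrc :=
  Finite.of_surjective ![.p0, .p1, .r, .s] fun
    | .p0 => ⟨0, rfl⟩ | .p1 => ⟨1, rfl⟩ | .r => ⟨2, rfl⟩ | .s => ⟨3, rfl⟩

instance : Finite PairingTgt :=
  Finite.of_surjective ![.x0, .x1, .y0, .y1] fun
    | .x0 => ⟨0, rfl⟩ | .x1 => ⟨1, rfl⟩ | .y0 => ⟨2, rfl⟩ | .y1 => ⟨3, rfl⟩

inductive PairingEdge : PairingSrc → PairingTgt → Type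
  | px0 : PairingEdge .p0 .x0
  | px1 : PairingEdge .p1 .x1
  | py0 : PairingEdge .p0 .y0
  | py1 : PairingEdge .p1 .y1
  | rx0 : PairingEdge .r .x0
  | rx1 : PairingEdge .r .x1
  | sy0 : PairingEdge .s .y0
  | sy1 : PairingEdge .s .y1

instance (a : PairingSrc) (b : PairingTgt) : Subsingleton (PairingEdge a b) :=
  ⟨fun f g => by cases f <;> cases g <;> rfl⟩

theorem exists_isWeakPairing (hC : WeaklyLex C) (A B : ExObj C) {P : C} (πX : P ⟶ A.X)
    (πY : P ⟶ B.X) : ∃ (G : C) (g0 g1 : G ⟶ P), ExObj.IsWeakPairing A B πX πY g0 g1 := by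
  obtain ⟨G, ℓ, hcone, hlim⟩ := hC.exists_weakLimit_bipartite (E := PairingEdge)
    (fun
      | .inl .p0 | .inl .p1 => P | .inl .r => A.R | .inl .s => B.R
      | .inr .x0 | .inr .x1 => A.X | .inr .y0 | .inr .y1 => B.X)
    (fun
      | .px0 | .px1 => πX | .py0 | .py1 => πY
      | .rx0 => A.r0 | .rx1 => A.r1 | .sy0 => B.r0 | .sy1 => B.r1)
  have hx0 : ℓ (.inl .p0) ≫ πX = ℓ (.inl .r) ≫ A.r0 := (hcone .px0).trans (hcone .rx0).symm
  have hx1 : ℓ (.inl .p1) ≫ πX = ℓ (.inl .r) ≫ A.r1 := (hcone .px1).trans (hcone .rx1).symm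
  have hy0 : ℓ (.inl .p0) ≫ πY = ℓ (.inl .s) ≫ B.r0 := (hcone .py0).trans (hcone .sy0).symm
  have hy1 : ℓ (.inl .p1) ≫ πY = ℓ (.inl .s) ≫ B.r1 := (hcone .py1).trans (hcone .sy1).symm
  refine ⟨G, ℓ (.inl .p0), ℓ (.inl .p1), fun {Z} a0 a1 => ⟨?_, ?_⟩⟩
  · rintro ⟨t, rfl, rfl⟩
    exact ⟨⟨t ≫ ℓ (.inl .r), by simp only [Category.assoc, hx0],
        by simp only [Category.assoc, hx1]⟩,
      ⟨t ≫ ℓ (.inl .s), by simp only [Category.assoc, hy0],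
        by simp only [Category.assoc, hy1]⟩⟩
  · rintro ⟨⟨tR, hR0, hR1⟩, ⟨tS, hS0, hS1⟩⟩
    obtain ⟨t, ht⟩ := hlim Z
      (fun
        | .inl .p0 => a0 | .inl .p1 => a1 | .inl .r => tR | .inl .s => tS
        | .inr .x0 => a0 ≫ πX | .inr .x1 => a1 ≫ πX
        | .inr .y0 => a0 ≫ πY | .inr .y1 => a1 ≫ πY)
      (fun h => by cases h <;> first | rfl | assumption)
    exact ⟨t, ht (.inl .p0), ht (.inl .p1)⟩

end WeaklyLex

/-- the exact completion of a weakly lex `Pos`-category has finite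
products (binary products and a terminal object). -/
theorem statement6 {C : Type u} [Category.{v} C] [PosEnriched C] (hC : WeaklyLex C) :
    (∀ A B : ExObj C, ∃ (P : ExObj C) (p : P ⟶ A) (q : P ⟶ B), PosEnr.IsBinProdP p q) ∧
    (∃ T : ExObj C, PosEnr.IsTerminalP T) := by
  refine ⟨fun A B => ?_, ?_⟩
  · obtain ⟨P, πX, πY, hP⟩ := hC.exists_weakBinProd A.X B.X
    obtain ⟨G, g0, g1, hG⟩ := hC.exists_isWeakPairing A B πX πY
    exact ⟨ExObj.prod hG, ExObj.prodFst hG, ExObj.prodSnd hG, ExObj.isBinProdP_prod hP hG⟩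
  · obtain ⟨T, hT⟩ := hC.exists_weakTerminal
    obtain ⟨TT, π0, π1, hTT⟩ := hC.exists_weakBinProd T T
    exact ⟨ExObj.codiscrete hTT, ExObj.isTerminalP_codiscrete hTT hT⟩
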